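/- arXiv:1707.01225 — 3 statements merged into one kernel-verified Lean document; each statement's English description precedes it below -/
import Mathlib

section
/- Let K be a positive integer, let R be a real symmetric positive semidefinite K×K matrix, and let R_n be a real symmetric positive definite K×K matrix with eigendecomposition R_n = Φ_n Λ_n Φ_nᵀ, where Φ_n is orthogonal and Λ_n is diagonal with strictly positive diagonal entries. Set W_n = Φ_n Λ_n^{-1/2} and R_adj = W_nᵀ R W_n, and let λ_max be the largest eigenvalue of R_adj. Then the supremum over all nonzero real K×K matrices X of the SNR rescaling functional I(X) = ‖Xᵀ R X‖₂ / ‖Xᵀ R_n X‖₂ equals λ_max, and this supremum is attained at X = W_n (in particular, for every nonzero X the denominator ‖Xᵀ R_n X‖₂ is strictly positive). -/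
/-!
Whitening by `Wₙ` turns `Rₙ` into the identity, `Wₙᵀ Rₙ Wₙ = 1`. Then `Wₙ` is invertible, every
`X` factors as `X = Wₙ Y`, and since the spectral norm of a positive semidefinite matrix is its
largest eigenvalue, `I(X) = λ_max(Yᵀ R_adj Y) / λ_max(Yᵀ Y)`. The Rayleigh-quotient
characterisation of `λ_max` gives
`vᵀ Yᵀ R_adj Y v ≤ λ_max(R_adj) ‖Y v‖² ≤ λ_max(R_adj) λ_max(Yᵀ Y) ‖v‖²`,
so `I(X) ≤ λ_max(R_adj)`, with equality at `Y = 1`.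
-/

open Matrix

/-- The largest eigenvalue of a real K×K matrix, as the supremum of its real spectrum. -/
noncomputable def maxEig {K : ℕ} (A : Matrix (Fin K) (Fin K) ℝ) : ℝ :=
  sSup (spectrum ℝ A)

/-- The spectral (L² operator) norm: ‖X‖₂ = √(λ_max(Xᵀ X)). -/
noncomputable def matSpectralNormL2 {K : ℕ} (X : Matrix (Fin K) (Fin K) ℝ) : ℝ :=
  Real.sqrt (maxEig (Xᵀ * X))

/-- For a diagonal matrix with strictly positive diagonal entries `d`,
`invSqrtDiag d` is the diagonal matrix Λ^{-1/2} of inverse square roots. -/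
noncomputable def invSqrtDiag {K : ℕ} (d : Fin K → ℝ) : Matrix (Fin K) (Fin K) ℝ :=
  Matrix.diagonal fun i => (Real.sqrt (d i))⁻¹

open scoped MatrixOrder

namespace Matrix

section Transpose

variable {m n : Type*} [Fintype m] [Fintype n]

theorem posSemidef_transpose_mul_self (Y : Matrix m n ℝ) : (Yᵀ * Y).PosSemidef := by
  simpa only [conjTranspose_eq_transpose_of_trivial] using posSemidef_conjTranspose_mul_self Y

theorem PosSemidef.transpose_mul_mul_same {A : Matrix m m ℝ} (hA : A.PosSemidef)
    (Y : Matrix m n ℝ) : (Yᵀ * A * Y).PosSemidef := by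
  simpa only [conjTranspose_eq_transpose_of_trivial] using hA.conjTranspose_mul_mul_same Y

end Transpose

section MaxEig

variable {K : ℕ} [NeZero K] {A M : Matrix (Fin K) (Fin K) ℝ}

theorem IsHermitian.isGreatest_maxEig (hA : A.IsHermitian) :
    IsGreatest (spectrum ℝ A) (maxEig A) := by
  have hne : (spectrum ℝ A).Nonempty := by
    rw [hA.spectrum_real_eq_range_eigenvalues]
    exact Set.range_nonempty _
  exact ⟨hne.csSup_mem A.finite_real_spectrum,
    fun _ hx => le_csSup A.finite_real_spectrum.bddAbove hx⟩

theorem IsHermitian.maxEig_le_iff (hA : A.IsHermitian) {t : ℝ} :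
    maxEig A ≤ t ↔ ∀ v : Fin K → ℝ, v ⬝ᵥ (A *ᵥ v) ≤ t * (v ⬝ᵥ v) := by
  rw [isLUB_le_iff hA.isGreatest_maxEig.isLUB, mem_upperBounds,
    ← le_algebraMap_iff_spectrum_le (ha := hA), le_iff, Algebra.algebraMap_eq_smul_one,
    posSemidef_iff_dotProduct_mulVec]
  simp only [sub_mulVec, smul_mulVec, one_mulVec, dotProduct_sub, dotProduct_smul, smul_eq_mul,
    star_trivial, sub_nonneg]
  exact and_iff_right ((isHermitian_one.smul (IsSelfAdjoint.all t)).sub hA)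

theorem IsHermitian.dotProduct_mulVec_le_maxEig (hA : A.IsHermitian) (v : Fin K → ℝ) :
    v ⬝ᵥ (A *ᵥ v) ≤ maxEig A * (v ⬝ᵥ v) :=
  hA.maxEig_le_iff.mp le_rfl v

theorem maxEig_one : maxEig (1 : Matrix (Fin K) (Fin K) ℝ) = 1 := by
  rw [maxEig, spectrum.one_eq, csSup_singleton]

theorem PosSemidef.maxEig_mul_self (hM : M.PosSemidef) : maxEig (M * M) = maxEig M ^ 2 := by
  have hsa : IsSelfAdjoint M := hM.1
  have hspec : spectrum ℝ (M * M) = (· ^ 2) '' spectrum ℝ M := by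
    rw [← sq, ← cfc_pow_id (R := ℝ) M 2, cfc_map_spectrum (fun x : ℝ => x ^ 2) M]
  have hmono : MonotoneOn (· ^ 2 : ℝ → ℝ) (spectrum ℝ M) := fun _ hx _ _ hxy =>
    pow_le_pow_left₀ ((posSemidef_iff_isHermitian_and_spectrum_nonneg.mp hM).2 hx) hxy 2
  rw [maxEig, hspec, (hmono.map_isGreatest hM.1.isGreatest_maxEig).csSup_eq]

theorem PosSemidef.maxEig_nonneg (hM : M.PosSemidef) : 0 ≤ maxEig M :=
  (hM.eigenvalues_nonneg 0).trans
    (hM.1.isGreatest_maxEig.2 (hM.1.eigenvalues_mem_spectrum_real 0))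

theorem PosSemidef.maxEig_pos (hM : M.PosSemidef) (h : M ≠ 0) : 0 < maxEig M := by
  by_contra! hle
  apply h
  rw [← hM.1.eigenvalues_eq_zero_iff]
  funext i
  exact le_antisymm ((hM.1.isGreatest_maxEig.2 (hM.1.eigenvalues_mem_spectrum_real i)).trans hle)
    (hM.eigenvalues_nonneg i)

theorem PosSemidef.matSpectralNormL2_eq_maxEig (hM : M.PosSemidef) :
    matSpectralNormL2 M = maxEig M := by
  have hMT : Mᵀ = M := by simpa only [conjTranspose_eq_transpose_of_trivial] using hM.1.eq
  rw [matSpectralNormL2, hMT, hM.maxEig_mul_self, Real.sqrt_sq hM.maxEig_nonneg]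

theorem maxEig_transpose_mul_self_pos {Y : Matrix (Fin K) (Fin K) ℝ} (hY : Y ≠ 0) :
    0 < maxEig (Yᵀ * Y) := by
  have hne := (conjTranspose_mul_self_eq_zero (A := Y)).not.mpr hY
  rw [conjTranspose_eq_transpose_of_trivial] at hne
  exact (posSemidef_transpose_mul_self Y).maxEig_pos hne

theorem PosSemidef.maxEig_transpose_mul_mul_le (hA : A.PosSemidef)
    (Y : Matrix (Fin K) (Fin K) ℝ) : maxEig (Yᵀ * A * Y) ≤ maxEig A * maxEig (Yᵀ * Y) := by
  have hYY := (posSemidef_transpose_mul_self Y).1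
  refine (hA.transpose_mul_mul_same Y).1.maxEig_le_iff.mpr fun v => ?_
  have hquad : ∀ B : Matrix (Fin K) (Fin K) ℝ,
      v ⬝ᵥ ((Yᵀ * B * Y) *ᵥ v) = (Y *ᵥ v) ⬝ᵥ (B *ᵥ (Y *ᵥ v)) := fun B => by
    rw [← mulVec_mulVec, ← mulVec_mulVec, dotProduct_mulVec, vecMul_transpose]
  calc v ⬝ᵥ ((Yᵀ * A * Y) *ᵥ v)
      = (Y *ᵥ v) ⬝ᵥ (A *ᵥ (Y *ᵥ v)) := hquad A
    _ ≤ maxEig A * ((Y *ᵥ v) ⬝ᵥ (Y *ᵥ v)) := hA.1.dotProduct_mulVec_le_maxEig _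
    _ = maxEig A * (v ⬝ᵥ ((Yᵀ * Y) *ᵥ v)) := by
        congr 1
        simpa using (hquad 1).symm
    _ ≤ maxEig A * (maxEig (Yᵀ * Y) * (v ⬝ᵥ v)) :=
        mul_le_mul_of_nonneg_left (hYY.dotProduct_mulVec_le_maxEig v) hA.maxEig_nonneg
    _ = maxEig A * maxEig (Yᵀ * Y) * (v ⬝ᵥ v) := by ring

end MaxEig

section Whitening

variable {n : Type*} [Fintype n] [DecidableEq n]

def IsWhitening (W N : Matrix n n ℝ) : Prop :=
  Wᵀ * N * W = 1

variable {W N : Matrix n n ℝ}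

theorem IsWhitening.mul_transpose_mul_mul (hW : IsWhitening W N) (X : Matrix n n ℝ) :
    W * (Wᵀ * N * X) = X := by
  have hinv : Wᵀ * N * W = 1 := hW
  calc W * (Wᵀ * N * X) = W * (Wᵀ * N) * X := by simp only [mul_assoc]
    _ = X := by rw [mul_eq_one_comm.mp hinv, one_mul]

theorem IsWhitening.ne_zero [Nonempty n] (hW : IsWhitening W N) : W ≠ 0 := by
  rintro rfl
  exact one_ne_zero (by simpa [IsWhitening] using hW.symm : (1 : Matrix n n ℝ) = 0)

theorem IsWhitening.transpose_mul_mul_eq (hW : IsWhitening W N) (M X : Matrix n n ℝ) :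
    Xᵀ * M * X = (Wᵀ * N * X)ᵀ * (Wᵀ * M * W) * (Wᵀ * N * X) := by
  conv_lhs => rw [← hW.mul_transpose_mul_mul X]
  simp only [transpose_mul, mul_assoc]

theorem IsWhitening.transpose_mul_mul_ne_zero (hW : IsWhitening W N) {X : Matrix n n ℝ}
    (hX : X ≠ 0) : Wᵀ * N * X ≠ 0 := by
  intro h
  apply hX
  rw [← hW.mul_transpose_mul_mul X, h, mul_zero]

end Whitening

theorem isWhitening_mul_invSqrtDiag {K : ℕ} {Φ : Matrix (Fin K) (Fin K) ℝ} {d : Fin K → ℝ}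
    (hΦ : Φᵀ * Φ = 1) (hd : ∀ i, 0 < d i) :
    IsWhitening (Φ * invSqrtDiag d) (Φ * diagonal d * Φᵀ) := by
  have hcancel : ∀ X : Matrix (Fin K) (Fin K) ℝ, Φᵀ * (Φ * X) = X := fun X => by
    rw [← mul_assoc, hΦ, one_mul]
  rw [IsWhitening, transpose_mul, invSqrtDiag, diagonal_transpose]
  simp only [mul_assoc, hcancel, diagonal_mul_diagonal]
  rw [← diagonal_one]
  congr 1
  funext i
  have hs : Real.sqrt (d i) ≠ 0 := (Real.sqrt_pos.mpr (hd i)).ne'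
  field_simp
  exact (Real.sq_sqrt (hd i).le).symm

noncomputable def snrRescaling {K : ℕ} (R N X : Matrix (Fin K) (Fin K) ℝ) : ℝ :=
  matSpectralNormL2 (Xᵀ * R * X) / matSpectralNormL2 (Xᵀ * N * X)

namespace IsWhitening

variable {K : ℕ} [NeZero K] {W N R : Matrix (Fin K) (Fin K) ℝ}

theorem matSpectralNormL2_pos (hW : IsWhitening W N) {X : Matrix (Fin K) (Fin K) ℝ}
    (hX : X ≠ 0) : 0 < matSpectralNormL2 (Xᵀ * N * X) := by
  rw [hW.transpose_mul_mul_eq N X, hW, mul_one,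
    (posSemidef_transpose_mul_self _).matSpectralNormL2_eq_maxEig]
  exact maxEig_transpose_mul_self_pos (hW.transpose_mul_mul_ne_zero hX)

theorem snrRescaling_le (hW : IsWhitening W N) (hR : R.PosSemidef)
    {X : Matrix (Fin K) (Fin K) ℝ} (hX : X ≠ 0) :
    snrRescaling R N X ≤ maxEig (Wᵀ * R * W) := by
  have hY := hW.transpose_mul_mul_ne_zero hX
  set Y := Wᵀ * N * X
  have hRW := hR.transpose_mul_mul_same W
  rw [snrRescaling, hW.transpose_mul_mul_eq R X, hW.transpose_mul_mul_eq N X, hW, mul_one,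
    (hRW.transpose_mul_mul_same Y).matSpectralNormL2_eq_maxEig,
    (posSemidef_transpose_mul_self Y).matSpectralNormL2_eq_maxEig,
    div_le_iff₀ (maxEig_transpose_mul_self_pos hY)]
  exact hRW.maxEig_transpose_mul_mul_le Y

theorem snrRescaling_self (hW : IsWhitening W N) (hR : R.PosSemidef) :
    snrRescaling R N W = maxEig (Wᵀ * R * W) := by
  rw [snrRescaling, hW, (hR.transpose_mul_mul_same W).matSpectralNormL2_eq_maxEig,
    PosSemidef.one.matSpectralNormL2_eq_maxEig, maxEig_one, div_one]

end IsWhitening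

end Matrix

theorem snr_sup_eq_maxEig_general (K : ℕ) (hK : 0 < K)
    (R Rn Φ : Matrix (Fin K) (Fin K) ℝ) (d : Fin K → ℝ)
    (hR : R.PosSemidef)
    (hΦ : Φᵀ * Φ = 1) (hd : ∀ i, 0 < d i)
    (hdecomp : Rn = Φ * Matrix.diagonal d * Φᵀ)
    (Wn : Matrix (Fin K) (Fin K) ℝ) (hWn : Wn = Φ * invSqrtDiag d)
    (lmax : ℝ) (hlmax : lmax = maxEig (Wnᵀ * R * Wn)) :
    (∀ X : Matrix (Fin K) (Fin K) ℝ, X ≠ 0 → 0 < matSpectralNormL2 (Xᵀ * Rn * X)) ∧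
    IsGreatest {y : ℝ | ∃ X : Matrix (Fin K) (Fin K) ℝ, X ≠ 0 ∧
        y = matSpectralNormL2 (Xᵀ * R * X) / matSpectralNormL2 (Xᵀ * Rn * X)} lmax ∧
    Wn ≠ 0 ∧
    matSpectralNormL2 (Wnᵀ * R * Wn) / matSpectralNormL2 (Wnᵀ * Rn * Wn) = lmax := by
  have : NeZero K := ⟨hK.ne'⟩
  subst hdecomp hWn hlmax
  have hW := isWhitening_mul_invSqrtDiag hΦ hd
  have hself := hW.snrRescaling_self hR
  refine ⟨fun X hX => hW.matSpectralNormL2_pos hX,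
    ⟨⟨_, hW.ne_zero, hself.symm⟩, ?_⟩, hW.ne_zero, hself⟩
  rintro _ ⟨X, hX, rfl⟩
  exact hW.snrRescaling_le hR hX

/-- The supremum of the SNR rescaling functional
`I(X) = ‖Xᵀ R X‖₂ / ‖Xᵀ Rₙ X‖₂` over nonzero `X` equals the largest eigenvalue of
`R_adj = Wₙᵀ R Wₙ`, and it is attained at `X = Wₙ`; moreover the denominator is
strictly positive for every nonzero `X`. -/
theorem snr_sup_eq_maxEig (K : ℕ) (hK : 0 < K)
    (R Rn Φ : Matrix (Fin K) (Fin K) ℝ) (d : Fin K → ℝ)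
    (hR : R.PosSemidef) (hRn : Rn.PosDef)
    (hΦ : Φᵀ * Φ = 1) (hd : ∀ i, 0 < d i)
    (hdecomp : Rn = Φ * Matrix.diagonal d * Φᵀ)
    (Wn : Matrix (Fin K) (Fin K) ℝ) (hWn : Wn = Φ * invSqrtDiag d)
    (lmax : ℝ) (hlmax : lmax = maxEig (Wnᵀ * R * Wn)) :
    (∀ X : Matrix (Fin K) (Fin K) ℝ, X ≠ 0 → 0 < matSpectralNormL2 (Xᵀ * Rn * X)) ∧
    IsGreatest {y : ℝ | ∃ X : Matrix (Fin K) (Fin K) ℝ, X ≠ 0 ∧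
        y = matSpectralNormL2 (Xᵀ * R * X) / matSpectralNormL2 (Xᵀ * Rn * X)} lmax ∧
    Wn ≠ 0 ∧
    matSpectralNormL2 (Wnᵀ * R * Wn) / matSpectralNormL2 (Wnᵀ * Rn * Wn) = lmax :=
  snr_sup_eq_maxEig_general K hK R Rn Φ d hR hΦ hd hdecomp Wn hWn lmax hlmax
end

section
/- Let K be a positive integer, let R be a real symmetric positive semidefinite K×K matrix, and let R_n be a real symmetric positive definite K×K matrix with eigendecomposition R_n = Φ_n Λ_n Φ_nᵀ, where Φ_n is orthogonal and Λ_n is diagonal with strictly positive diagonal entries. Set W_n = Φ_n Λ_n^{-1/2} and let λ_max be the largest eigenvalue of R_adj = W_nᵀ R W_n. Then for every real K×K matrix X, ‖Xᵀ R X‖₂ ≤ λ_max · ‖Xᵀ R_n X‖₂. -/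
/-!
The whitening matrix `Wₙ` has the right inverse `Vₙ = Λₙ^{1/2} Φₙᵀ`, and `Rₙ = Vₙᵀ Vₙ`.
Conjugating the Loewner bound `R_adj ≤ λ_max • 1` by `Vₙ` gives `R ≤ λ_max • Rₙ`, and
conjugating again by `X` gives `Xᵀ R X ≤ λ_max • Xᵀ Rₙ X`. For positive semidefinite matrices
the spectral norm is the largest eigenvalue, which is monotone in the Loewner order.
-/

open Matrix

/-- The spectral (L² operator) norm: ‖X‖₂ = √(λ_max(Xᵀ X)). -/
noncomputable def matSpectralNorm {K : ℕ} (X : Matrix (Fin K) (Fin K) ℝ) : ℝ :=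
  Real.sqrt (maxEig (Xᵀ * X))

open scoped MatrixOrder

section MaxEig

variable {K : ℕ}

lemma le_maxEig_of_mem_spectrum {A : Matrix (Fin K) (Fin K) ℝ} {x : ℝ}
    (hx : x ∈ spectrum ℝ A) : x ≤ maxEig A :=
  le_csSup A.finite_spectrum.bddAbove hx

lemma maxEig_nonneg {A : Matrix (Fin K) (Fin K) ℝ} (hA : 0 ≤ A) : 0 ≤ maxEig A :=
  Real.sSup_nonneg fun _ hx => spectrum_nonneg_of_nonneg hA hx

lemma le_algebraMap_maxEig {A : Matrix (Fin K) (Fin K) ℝ} (hA : A.IsHermitian) :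
    A ≤ algebraMap ℝ _ (maxEig A) :=
  (le_algebraMap_iff_spectrum_le hA.isSelfAdjoint).2 fun _ => le_maxEig_of_mem_spectrum

-- `0 ≤ c` is needed only for an empty spectrum (`K = 0`), where `maxEig A = sSup ∅ = 0`.
lemma maxEig_le_of_le_algebraMap {A : Matrix (Fin K) (Fin K) ℝ} {c : ℝ} (hc : 0 ≤ c)
    (hA : A.IsHermitian) (h : A ≤ algebraMap ℝ _ c) : maxEig A ≤ c :=
  Real.sSup_le ((le_algebraMap_iff_spectrum_le hA.isSelfAdjoint).1 h) hc

lemma isGreatest_spectrum_maxEig (hK : 0 < K) {A : Matrix (Fin K) (Fin K) ℝ}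
    (hA : A.IsHermitian) : IsGreatest (spectrum ℝ A) (maxEig A) := by
  have hne : (spectrum ℝ A).Nonempty :=
    hA.spectrum_real_eq_range_eigenvalues ▸ ⟨_, ⟨⟨0, hK⟩, rfl⟩⟩
  exact ⟨hne.csSup_mem A.finite_spectrum, fun _ => le_maxEig_of_mem_spectrum⟩

lemma maxEig_mul_self (hK : 0 < K) {A : Matrix (Fin K) (Fin K) ℝ} (hA : 0 ≤ A) :
    maxEig (A * A) = maxEig A ^ 2 := by
  have hspec : spectrum ℝ (A * A) = (fun x : ℝ => x ^ 2) '' spectrum ℝ A := by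
    rw [← pow_two, ← cfc_pow_id (R := ℝ) A 2, cfc_map_spectrum (fun x : ℝ => x ^ 2) A]
  have hmono : MonotoneOn (fun x : ℝ => x ^ 2) (spectrum ℝ A) := fun x hx _ _ hxy =>
    pow_le_pow_left₀ (spectrum_nonneg_of_nonneg hA hx) hxy 2
  rw [maxEig, hspec, (hmono.map_isGreatest (isGreatest_spectrum_maxEig hK
    (nonneg_iff_posSemidef.1 hA).isHermitian)).csSup_eq, maxEig]

lemma matSpectralNorm_eq_maxEig (hK : 0 < K) {A : Matrix (Fin K) (Fin K) ℝ} (hA : 0 ≤ A) :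
    matSpectralNorm A = maxEig A := by
  have hAT : Aᵀ = A := (IsSelfAdjoint.of_nonneg hA).star_eq
  rw [matSpectralNorm, hAT, maxEig_mul_self hK hA, Real.sqrt_sq (maxEig_nonneg hA)]

lemma maxEig_le_mul_maxEig_of_le_smul {A B : Matrix (Fin K) (Fin K) ℝ} {c : ℝ} (hc : 0 ≤ c)
    (hA : 0 ≤ A) (hB : 0 ≤ B) (h : A ≤ c • B) : maxEig A ≤ c * maxEig B := by
  refine maxEig_le_of_le_algebraMap (mul_nonneg hc (maxEig_nonneg hB))
    (nonneg_iff_posSemidef.1 hA).isHermitian (h.trans ?_)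
  rw [map_mul, ← Algebra.smul_def]
  exact smul_le_smul_of_nonneg_left
    (le_algebraMap_maxEig (nonneg_iff_posSemidef.1 hB).isHermitian) hc

end MaxEig

section RealMatrix

variable {n : Type*} [Fintype n]

lemma transpose_mul_mul_nonneg {A : Matrix n n ℝ} (hA : 0 ≤ A) (X : Matrix n n ℝ) :
    0 ≤ Xᵀ * A * X :=
  star_left_conjugate_nonneg hA X

lemma transpose_mul_mul_le_transpose_mul_mul {A B : Matrix n n ℝ} (h : A ≤ B)
    (X : Matrix n n ℝ) : Xᵀ * A * X ≤ Xᵀ * B * X :=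
  star_left_conjugate_le_conjugate h X

lemma le_smul_transpose_mul_self_of_whitened_le [DecidableEq n] {W V R : Matrix n n ℝ} {c : ℝ}
    (hWV : W * V = 1) (h : Wᵀ * R * W ≤ algebraMap ℝ _ c) : R ≤ c • (Vᵀ * V) :=
  calc R = (W * V)ᵀ * R * (W * V) := by rw [hWV, transpose_one, Matrix.one_mul, Matrix.mul_one]
    _ = Vᵀ * (Wᵀ * R * W) * V := by simp only [transpose_mul, Matrix.mul_assoc]
    _ ≤ Vᵀ * algebraMap ℝ _ c * V := transpose_mul_mul_le_transpose_mul_mul h V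
    _ = c • (Vᵀ * V) := by
      rw [Algebra.algebraMap_eq_smul_one, Matrix.mul_smul, Matrix.mul_one, Matrix.smul_mul]

lemma mul_diagonal_mul_transpose_eq_transpose_mul_self [DecidableEq n]
    (Φ : Matrix n n ℝ) {d : n → ℝ} (hd : ∀ i, 0 ≤ d i) :
    Φ * diagonal d * Φᵀ =
      (diagonal (fun i => √(d i)) * Φᵀ)ᵀ * (diagonal (fun i => √(d i)) * Φᵀ) := by
  have hdiag : diagonal d = diagonal (fun i => √(d i)) * diagonal (fun i => √(d i)) := by
    rw [diagonal_mul_diagonal]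
    exact congrArg diagonal (funext fun i => (Real.mul_self_sqrt (hd i)).symm)
  rw [transpose_mul, transpose_transpose, diagonal_transpose, hdiag]
  simp only [Matrix.mul_assoc]

end RealMatrix

lemma whitening_mul_sqrt_diagonal {K : ℕ} {Φ : Matrix (Fin K) (Fin K) ℝ} {d : Fin K → ℝ}
    (hΦ : Φᵀ * Φ = 1) (hd : ∀ i, 0 < d i) :
    Φ * invSqrtDiag d * (diagonal (fun i => √(d i)) * Φᵀ) = 1 := by
  have hdiag : invSqrtDiag d * diagonal (fun i => √(d i)) = 1 := by
    rw [invSqrtDiag, diagonal_mul_diagonal, ← diagonal_one]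
    exact congrArg diagonal (funext fun i => inv_mul_cancel₀ (Real.sqrt_pos.2 (hd i)).ne')
  rw [Matrix.mul_assoc, ← Matrix.mul_assoc (invSqrtDiag d), hdiag, Matrix.one_mul,
    mul_eq_one_comm.1 hΦ]

theorem snr_functional_upper_bound_general (K : ℕ) (hK : 0 < K)
    (R Rn Φ : Matrix (Fin K) (Fin K) ℝ) (d : Fin K → ℝ)
    (hR : R.PosSemidef)
    (hΦ : Φᵀ * Φ = 1) (hd : ∀ i, 0 < d i)
    (hdecomp : Rn = Φ * Matrix.diagonal d * Φᵀ)
    (Wn : Matrix (Fin K) (Fin K) ℝ) (hWn : Wn = Φ * invSqrtDiag d)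
    (lmax : ℝ) (hlmax : lmax = maxEig (Wnᵀ * R * Wn)) :
    ∀ X : Matrix (Fin K) (Fin K) ℝ,
      matSpectralNorm (Xᵀ * R * X) ≤ lmax * matSpectralNorm (Xᵀ * Rn * X) := by
  intro X
  set V := diagonal (fun i => √(d i)) * Φᵀ
  have hRnV : Rn = Vᵀ * V :=
    hdecomp.trans (mul_diagonal_mul_transpose_eq_transpose_mul_self Φ fun i => (hd i).le)
  have hR₀ : 0 ≤ R := nonneg_iff_posSemidef.2 hR
  have hRadj₀ : 0 ≤ Wnᵀ * R * Wn := transpose_mul_mul_nonneg hR₀ Wn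
  have hRadj : Wnᵀ * R * Wn ≤ algebraMap ℝ _ lmax :=
    hlmax ▸ le_algebraMap_maxEig (nonneg_iff_posSemidef.1 hRadj₀).isHermitian
  have hRle : R ≤ lmax • Rn := hRnV ▸
    le_smul_transpose_mul_self_of_whitened_le (hWn ▸ whitening_mul_sqrt_diagonal hΦ hd) hRadj
  have hXle : Xᵀ * R * X ≤ lmax • (Xᵀ * Rn * X) := by
    simpa only [Matrix.mul_smul, Matrix.smul_mul] using
      transpose_mul_mul_le_transpose_mul_mul hRle X
  have hXRX₀ : 0 ≤ Xᵀ * R * X := transpose_mul_mul_nonneg hR₀ X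
  have hRn₀ : 0 ≤ Rn := hRnV ▸ star_mul_self_nonneg V
  have hXRnX₀ : 0 ≤ Xᵀ * Rn * X := transpose_mul_mul_nonneg hRn₀ X
  rw [matSpectralNorm_eq_maxEig hK hXRX₀, matSpectralNorm_eq_maxEig hK hXRnX₀]
  exact maxEig_le_mul_maxEig_of_le_smul (hlmax ▸ maxEig_nonneg hRadj₀) hXRX₀ hXRnX₀ hXle

/-- For every real K×K matrix `X`,
`‖Xᵀ R X‖₂ ≤ λ_max(R_adj) · ‖Xᵀ Rₙ X‖₂`. -/
theorem snr_functional_upper_bound (K : ℕ) (hK : 0 < K)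
    (R Rn Φ : Matrix (Fin K) (Fin K) ℝ) (d : Fin K → ℝ)
    (hR : R.PosSemidef) (hRn : Rn.PosDef)
    (hΦ : Φᵀ * Φ = 1) (hd : ∀ i, 0 < d i)
    (hdecomp : Rn = Φ * Matrix.diagonal d * Φᵀ)
    (Wn : Matrix (Fin K) (Fin K) ℝ) (hWn : Wn = Φ * invSqrtDiag d)
    (lmax : ℝ) (hlmax : lmax = maxEig (Wnᵀ * R * Wn)) :
    ∀ X : Matrix (Fin K) (Fin K) ℝ,
      matSpectralNorm (Xᵀ * R * X) ≤ lmax * matSpectralNorm (Xᵀ * Rn * X) :=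
  snr_functional_upper_bound_general K hK R Rn Φ d hR hΦ hd hdecomp Wn hWn lmax hlmax
end

section
/- Let K be a positive integer, let R be a real symmetric positive semidefinite K×K matrix, and let R_n be a real symmetric positive definite K×K matrix with eigendecomposition R_n = Φ_n Λ_n Φ_nᵀ, where Φ_n is orthogonal and Λ_n is diagonal with strictly positive diagonal entries. Set W_n = Φ_n Λ_n^{-1/2} and R_adj = W_nᵀ R W_n, and let λ_max be the largest eigenvalue of R_adj. Let Φ_adj be any orthogonal K×K matrix such that Φ_adjᵀ R_adj Φ_adj is diagonal (i.e., the columns of Φ_adj are eigenvectors of R_adj). Then the SNR rescaling functional attains the value λ_max at X = W_n Φ_adj; that is, ‖(W_nΦ_adj)ᵀ R (W_nΦ_adj)‖₂ / ‖(W_nΦ_adj)ᵀ R_n (W_nΦ_adj)‖₂ = λ_max. -/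
open Matrix

/-!
With `X = Wₙ Φ_adj`, the whitening gives `Xᵀ Rₙ X = Φ_adjᵀ Φ_adj = 1`, whose spectral norm is `1`,
while `Xᵀ R X = Φ_adjᵀ R_adj Φ_adj` is a diagonal matrix `D` with nonnegative entries (it is
congruent to `R ⪰ 0`). The spectral norm of `D` is its largest entry, which is the largest
eigenvalue of `D`, and hence of `R_adj`, since orthogonal conjugation preserves the spectrum.
-/

section

variable {K : ℕ}

theorem invSqrtDiag_mul_diagonal_mul_invSqrtDiag {d : Fin K → ℝ} (hd : ∀ i, 0 < d i) :
    invSqrtDiag d * diagonal d * invSqrtDiag d = 1 := by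
  rw [invSqrtDiag, diagonal_mul_diagonal, diagonal_mul_diagonal, ← diagonal_one]
  congr 1
  funext i
  have hsqrt : Real.sqrt (d i) ≠ 0 := (Real.sqrt_pos.mpr (hd i)).ne'
  field_simp
  exact (Real.sq_sqrt (hd i).le).symm

theorem whitening_transpose_mul_mul_self {Φ : Matrix (Fin K) (Fin K) ℝ} {d : Fin K → ℝ}
    (hΦ : Φᵀ * Φ = 1) (hd : ∀ i, 0 < d i) :
    (Φ * invSqrtDiag d)ᵀ * (Φ * diagonal d * Φᵀ) * (Φ * invSqrtDiag d) = 1 :=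
  calc (Φ * invSqrtDiag d)ᵀ * (Φ * diagonal d * Φᵀ) * (Φ * invSqrtDiag d)
      = invSqrtDiag d * (Φᵀ * Φ) * diagonal d * (Φᵀ * Φ) * invSqrtDiag d := by
        simp only [transpose_mul, invSqrtDiag, diagonal_transpose, Matrix.mul_assoc]
    _ = 1 := by
        rw [hΦ, Matrix.mul_one, Matrix.mul_one, invSqrtDiag_mul_diagonal_mul_invSqrtDiag hd]

theorem maxEig_transpose_mul_mul_of_orthogonal {U : Matrix (Fin K) (Fin K) ℝ} (hU : Uᵀ * U = 1)
    (A : Matrix (Fin K) (Fin K) ℝ) : maxEig (Uᵀ * A * U) = maxEig A := by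
  have hUmem : U ∈ unitaryGroup (Fin K) ℝ := by
    rwa [mem_unitaryGroup_iff', star_eq_conjTranspose, conjTranspose_eq_transpose_of_trivial]
  simpa [maxEig, star_eq_conjTranspose] using
    congrArg sSup (Unitary.spectrum_star_left_conjugate (R := ℝ) (a := A) (U := ⟨U, hUmem⟩))

theorem maxEig_diagonal (f : Fin K → ℝ) : maxEig (diagonal f) = ⨆ i, f i := by
  rw [maxEig, spectrum_diagonal, iSup]

theorem matSpectralNorm_diagonal [Nonempty (Fin K)] (f : Fin K → ℝ) :
    matSpectralNorm (diagonal f) = ⨆ i, |f i| := by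
  rw [matSpectralNorm, diagonal_transpose, diagonal_mul_diagonal, maxEig_diagonal,
    Real.sqrt_monotone.map_ciSup_of_continuousAt Real.continuous_sqrt.continuousAt
      (Set.finite_range _).bddAbove]
  simp only [Real.sqrt_mul_self_eq_abs]

theorem matSpectralNorm_diagonal_of_nonneg [Nonempty (Fin K)] {f : Fin K → ℝ}
    (hf : ∀ i, 0 ≤ f i) : matSpectralNorm (diagonal f) = maxEig (diagonal f) := by
  simp only [matSpectralNorm_diagonal, maxEig_diagonal, abs_of_nonneg (hf _)]

theorem matSpectralNorm_one [Nonempty (Fin K)] :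
    matSpectralNorm (1 : Matrix (Fin K) (Fin K) ℝ) = 1 := by
  simp [matSpectralNorm, maxEig, spectrum.one_eq]

end

theorem snr_attained_at_whitening_rotated_general (K : ℕ) (hK : 0 < K)
    (R Rn Φ : Matrix (Fin K) (Fin K) ℝ) (d : Fin K → ℝ)
    (hR : R.PosSemidef)
    (hΦ : Φᵀ * Φ = 1) (hd : ∀ i, 0 < d i)
    (hdecomp : Rn = Φ * Matrix.diagonal d * Φᵀ)
    (Wn : Matrix (Fin K) (Fin K) ℝ) (hWn : Wn = Φ * invSqrtDiag d)
    (lmax : ℝ) (hlmax : lmax = maxEig (Wnᵀ * R * Wn))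
    (Φadj : Matrix (Fin K) (Fin K) ℝ)
    (hΦadj : Φadjᵀ * Φadj = 1)
    (hdiag : (Φadjᵀ * (Wnᵀ * R * Wn) * Φadj).IsDiag) :
    matSpectralNorm ((Wn * Φadj)ᵀ * R * (Wn * Φadj)) /
      matSpectralNorm ((Wn * Φadj)ᵀ * Rn * (Wn * Φadj)) = lmax := by
  have : Nonempty (Fin K) := Fin.pos_iff_nonempty.mp hK
  have hcongr (M : Matrix (Fin K) (Fin K) ℝ) :
      (Wn * Φadj)ᵀ * M * (Wn * Φadj) = Φadjᵀ * (Wnᵀ * M * Wn) * Φadj := by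
    simp only [transpose_mul, Matrix.mul_assoc]
  have hD_psd : (Φadjᵀ * (Wnᵀ * R * Wn) * Φadj).PosSemidef := by
    simpa only [conjTranspose_eq_transpose_of_trivial, hcongr] using
      hR.conjTranspose_mul_mul_same (Wn * Φadj)
  have hD_nonneg : ∀ i, 0 ≤ (Φadjᵀ * (Wnᵀ * R * Wn) * Φadj).diag i := fun _ ↦ hD_psd.diag_nonneg
  have hden : (Wn * Φadj)ᵀ * Rn * (Wn * Φadj) = 1 := by
    rw [hcongr, hdecomp, hWn, whitening_transpose_mul_mul_self hΦ hd, Matrix.mul_one, hΦadj]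
  rw [hden, matSpectralNorm_one, div_one, hcongr, ← hdiag.diagonal_diag,
    matSpectralNorm_diagonal_of_nonneg hD_nonneg, hdiag.diagonal_diag,
    maxEig_transpose_mul_mul_of_orthogonal hΦadj, hlmax]

/-- For any orthogonal `Φ_adj` diagonalizing `R_adj = Wₙᵀ R Wₙ`, the SNR
rescaling functional attains `λ_max(R_adj)` at `X = Wₙ Φ_adj`. -/
theorem snr_attained_at_whitening_rotated (K : ℕ) (hK : 0 < K)
    (R Rn Φ : Matrix (Fin K) (Fin K) ℝ) (d : Fin K → ℝ)
    (hR : R.PosSemidef) (hRn : Rn.PosDef)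
    (hΦ : Φᵀ * Φ = 1) (hd : ∀ i, 0 < d i)
    (hdecomp : Rn = Φ * Matrix.diagonal d * Φᵀ)
    (Wn : Matrix (Fin K) (Fin K) ℝ) (hWn : Wn = Φ * invSqrtDiag d)
    (lmax : ℝ) (hlmax : lmax = maxEig (Wnᵀ * R * Wn))
    (Φadj : Matrix (Fin K) (Fin K) ℝ)
    (hΦadj : Φadjᵀ * Φadj = 1)
    (hdiag : (Φadjᵀ * (Wnᵀ * R * Wn) * Φadj).IsDiag) :
    matSpectralNorm ((Wn * Φadj)ᵀ * R * (Wn * Φadj)) /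
      matSpectralNorm ((Wn * Φadj)ᵀ * Rn * (Wn * Φadj)) = lmax :=
  snr_attained_at_whitening_rotated_general K hK R Rn Φ d hR hΦ hd hdecomp Wn hWn lmax hlmax Φadj
    hΦadj hdiag
end
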